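/- Let M be a topological space and f : M → M a continuous map whose periodic points are dense in its nonwandering set Ω_f. Then the nonwandering set of the shift F : M_F → M_F is exactly Ω_F := Ω_f^ℤ ∩ M_F. -/

import Mathlib

/-!
Each coordinate projection `M_F → M` semiconjugates `F` to `f`, so it maps `Ω(F)` into `Ω_f`.
Conversely, since an open set of `M_F` constrains only finitely many coordinates and
`x_j = f^[j - i] x_i` for `j ≥ i`, every neighbourhood of a point of `M_F` contains all points
of `M_F` whose `i`-th coordinate lies in some open set of `M`, for `i` small enough. A periodic point of `f` satisfying that condition extends to an
`F`-periodic point of `M_F`, so `Ω_f^ℤ ∩ M_F` lies in the closure of the periodic points of `F`,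
which is contained in `Ω(F)`.
-/

/-- The nonwandering set of a self-map `g` of a topological space: the points `x` such
that for every neighborhood `U` of `x` there is `n ≥ 1` with `g^n(U) ∩ U ≠ ∅`. -/
def nonwanderingSet {X : Type*} [TopologicalSpace X] (g : X → X) : Set X :=
  {x : X | ∀ U : Set X, IsOpen U → x ∈ U → ∃ n : ℕ, 1 ≤ n ∧ (g^[n] '' U ∩ U).Nonempty}

/-- The shift map `F` on the inverse limit `M_F = { x ∈ M^ℤ | f(x_i) = x_{i+1} }`. -/
def shiftMap {M : Type*} (f : M → M)
    (x : {x : ℤ → M // ∀ i : ℤ, f (x i) = x (i + 1)}) :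
    {x : ℤ → M // ∀ i : ℤ, f (x i) = x (i + 1)} :=
  ⟨fun i => x.val (i + 1), fun i => x.property (i + 1)⟩

open Function Set

section Nonwandering

variable {X Y : Type*} [TopologicalSpace X] [TopologicalSpace Y] {g : X → X}

theorem closure_periodicPts_subset_nonwanderingSet :
    closure (periodicPts g) ⊆ nonwanderingSet g := by
  intro x hx U hU hxU
  obtain ⟨p, hpU, k, hk, hp⟩ := mem_closure_iff.1 hx U hU hxU
  exact ⟨k, hk, p, ⟨p, hpU, hp⟩, hpU⟩

theorem mapsTo_nonwanderingSet_of_semiconj {f : Y → Y} {π : X → Y} (hπ : Continuous π)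
    (h : Semiconj π g f) : MapsTo π (nonwanderingSet g) (nonwanderingSet f) := by
  intro x hx U hU hxU
  obtain ⟨n, hn, _, ⟨z, hzU, rfl⟩, hgzU⟩ := hx (π ⁻¹' U) (hU.preimage hπ) hxU
  exact ⟨n, hn, f^[n] (π z), ⟨π z, hzU, rfl⟩, h.iterate_right n z ▸ hgzU⟩

end Nonwandering

theorem Function.IsPeriodicPt.iterate_eq_of_modEq {α : Type*} {f : α → α} {p : α} {k m n : ℕ}
    (hp : IsPeriodicPt f k p) (h : m ≡ n [MOD k]) : f^[m] p = f^[n] p := by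
  rw [← hp.iterate_mod_apply m, ← hp.iterate_mod_apply n, h]

abbrev InverseLimit {M : Type*} (f : M → M) : Type _ :=
  {x : ℤ → M // ∀ i : ℤ, f (x i) = x (i + 1)}

namespace InverseLimit

variable {M : Type*} {f : M → M}

theorem iterate_apply (x : InverseLimit f) (i : ℤ) (n : ℕ) : f^[n] (x.1 i) = x.1 (i + n) := by
  induction n with
  | zero => simp
  | succ n ih =>
    rw [iterate_succ_apply', ih, x.2]
    push_cast
    ring_nf

theorem apply_eq_iterate (x : InverseLimit f) {i j : ℤ} (hij : i ≤ j) :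
    x.1 j = f^[(j - i).toNat] (x.1 i) := by
  rw [iterate_apply, Int.toNat_of_nonneg (sub_nonneg.2 hij), add_sub_cancel]

theorem shiftMap_iterate_apply (n : ℕ) (x : InverseLimit f) (i : ℤ) :
    ((shiftMap f)^[n] x).1 i = x.1 (i + n) := by
  induction n generalizing x with
  | zero => simp
  | succ n ih =>
    rw [iterate_succ_apply, ih]
    show x.1 (i + n + 1) = _
    push_cast
    ring_nf

theorem exists_isPeriodicPt_shiftMap_apply_eq {p : M} {k : ℕ} (hk : 0 < k)
    (hp : IsPeriodicPt f k p) (i : ℤ) :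
    ∃ y : InverseLimit f, y.1 i = p ∧ IsPeriodicPt (shiftMap f) k y := by
  have : NeZero k := ⟨hk.ne'⟩
  let y : ℤ → M := fun j => f^[((j - i : ℤ) : ZMod k).val] p
  have hy : ∀ j, f (y j) = y (j + 1) := by
    intro j
    rw [← iterate_succ_apply' f]
    apply hp.iterate_eq_of_modEq
    rw [← ZMod.natCast_eq_natCast_iff]
    push_cast [ZMod.natCast_zmod_val]
    ring
  refine ⟨⟨y, hy⟩, by simp [y], Subtype.ext (funext fun j => ?_)⟩
  rw [shiftMap_iterate_apply]
  simp only [y, Int.cast_sub, Int.cast_add, Int.cast_natCast, ZMod.natCast_self, add_zero]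

variable [TopologicalSpace M]

theorem exists_isOpen_coord_mem_subset (hf : Continuous f) {V : Set (InverseLimit f)}
    (hV : IsOpen V) {x : InverseLimit f} (hx : x ∈ V) :
    ∃ (i : ℤ) (W : Set M), IsOpen W ∧ x.1 i ∈ W ∧ ∀ y : InverseLimit f, y.1 i ∈ W → y ∈ V := by
  obtain ⟨U, hU, rfl⟩ := isOpen_induced_iff.1 hV
  obtain ⟨S, u, hu, hSU⟩ := isOpen_pi_iff.1 hU x.1 hx
  obtain ⟨i, hi⟩ := S.bddBelow
  let W := ⋂ j ∈ S, f^[(j - i).toNat] ⁻¹' u j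
  have hW : ∀ y : InverseLimit f, y.1 i ∈ W ↔ y.1 ∈ (S : Set ℤ).pi u := by
    intro y
    simp only [W, mem_iInter₂, mem_preimage, mem_pi, Finset.mem_coe]
    exact forall₂_congr fun j hj => by rw [← y.apply_eq_iterate (hi hj)]
  refine ⟨i, W, isOpen_biInter_finset fun j hj => (hu j hj).1.preimage (hf.iterate _),
    (hW x).2 fun j hj => (hu j hj).2, fun y hy => hSU ((hW y).1 hy)⟩

theorem mem_closure_periodicPts_shiftMap (hf : Continuous f) {x : InverseLimit f}
    (hx : ∀ j, x.1 j ∈ closure (periodicPts f)) :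
    x ∈ closure (periodicPts (shiftMap f)) := by
  refine mem_closure_iff.2 fun V hV hxV => ?_
  obtain ⟨i, W, hW, hxW, hWV⟩ := exists_isOpen_coord_mem_subset hf hV hxV
  obtain ⟨p, hpW, k, hk, hp⟩ := mem_closure_iff.1 (hx i) W hW hxW
  obtain ⟨y, hyi, hy⟩ := exists_isPeriodicPt_shiftMap_apply_eq hk hp i
  exact ⟨y, hWV y (hyi ▸ hpW), k, hk, hy⟩

end InverseLimit

/-- If the periodic points of `f` are dense in its nonwandering set `Ω_f`, then the
nonwandering set of the shift `F : M_F → M_F` is exactly `Ω_F = Ω_f^ℤ ∩ M_F`. -/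
theorem nonwandering_of_shift_eq
    {M : Type*} [TopologicalSpace M] (f : M → M) (hf : Continuous f)
    (hdense : nonwanderingSet f ⊆ closure (Function.periodicPts f)) :
    nonwanderingSet (shiftMap f) =
      {x : {x : ℤ → M // ∀ i : ℤ, f (x i) = x (i + 1)} |
        ∀ j : ℤ, x.val j ∈ nonwanderingSet f} := by
  ext x
  refine ⟨fun hx j => ?_, fun hx => ?_⟩
  · have hπ : Semiconj (fun y : InverseLimit f => y.1 j) (shiftMap f) f := fun y => (y.2 j).symm
    exact mapsTo_nonwanderingSet_of_semiconj ((continuous_apply j).comp continuous_subtype_val)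
      hπ hx
  · exact closure_periodicPts_subset_nonwanderingSet <|
      InverseLimit.mem_closure_periodicPts_shiftMap hf fun j => hdense (hx j)
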